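/- arXiv:2105.06955 — 5 statements merged into one kernel-verified Lean document; each statement's English description precedes it below -/
import Mathlib

section
/- As formal power series in variables x̄ and y over ℚ[v], the identity ∑_{i≥1, j≥1} (∑_{r≥0} (i+j-2-r)!/((i-1-r)!(j-1-r)!r!) · v^r) · x̄^i y^j = x̄ y / (1 - x̄ - v·x̄·y - y) holds, where the inner sum ranges over r with 0 ≤ r ≤ min(i,j)-1. -/
open Finset Polynomial

/-!
Write `x̄ = X 0`, `y = X 1`. For `i = a + 1`, `j = b + 1` the coefficient of `vʳ` is the trinomial
coefficient `(a+b-r)! / ((a-r)! (b-r)! r!) = C(a+b-r, a) C(a, r)`, which counts lattice paths from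
`(0,0)` to `(a,b)` with steps `(1,0)`, `(0,1)`, `(1,1)` using `r` diagonal steps. Splitting off the
last step gives `D(a+1,b+1) = D(a,b+1) + D(a+1,b) + v D(a,b)` for the path polynomials `D`, with
`D(a,0) = D(0,b) = 1`; this says exactly `(1 - x̄ - v x̄ y - y) ∑ D(a,b) x̄ᵃ yᵇ = 1`.
-/

namespace Nat

theorem choose_add_sub_mul_choose_eq_zero {a b r : ℕ} (h : min a b < r) :
    (a + b - r).choose a * a.choose r = 0 := by
  rcases lt_or_ge a r with har | hra
  · rw [choose_eq_zero_of_lt har, mul_zero]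
  · rw [choose_eq_zero_of_lt (by omega : a + b - r < a), zero_mul]

theorem choose_add_sub_mul_choose_succ (i j s : ℕ) :
    (i + j + 1 - s).choose (i + 1) * (i + 1).choose (s + 1) =
      (i + j - s).choose i * i.choose (s + 1) + (i + j - s).choose (i + 1) * (i + 1).choose (s + 1)
        + (i + j - s).choose i * i.choose s := by
  rcases le_or_gt s (i + j) with hs | hs
  · rw [show i + j + 1 - s = i + j - s + 1 by omega, choose_succ_succ' (i + j - s),
      choose_succ_succ' i]
    ring
  · simp [choose_eq_zero_of_lt (by omega : i < s), choose_eq_zero_of_lt (by omega : i < s + 1),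
      choose_eq_zero_of_lt (by omega : i + 1 < s + 1)]

theorem cast_choose_add_sub_mul_choose {a b r : ℕ} (ha : r ≤ a) (hb : r ≤ b) :
    (((a + b - r).choose a * a.choose r : ℕ) : ℚ) =
      (a + b - r)! / ((a - r)! * (b - r)! * r !) := by
  rw [Nat.cast_mul, Nat.cast_choose ℚ (by omega : a ≤ a + b - r), Nat.cast_choose ℚ ha,
    show a + b - r - a = b - r by omega]
  field_simp

end Nat

section Delannoy

variable (R : Type*) [CommSemiring R]

noncomputable def delannoyPoly (a b : ℕ) : R[X] :=
  ∑ r ∈ range (min a b + 1), C (((a + b - r).choose a * a.choose r : ℕ) : R) * X ^ r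

variable {R}

theorem coeff_delannoyPoly (a b r : ℕ) :
    (delannoyPoly R a b).coeff r = (((a + b - r).choose a * a.choose r : ℕ) : R) := by
  simp only [delannoyPoly, finsetSum_coeff, coeff_C_mul_X_pow, sum_ite_eq, mem_range]
  split_ifs with hr
  · rfl
  · rw [Nat.choose_add_sub_mul_choose_eq_zero (by omega), Nat.cast_zero]

@[simp]
theorem delannoyPoly_zero_left (b : ℕ) : delannoyPoly R 0 b = 1 := by
  simp [delannoyPoly]

@[simp]
theorem delannoyPoly_zero_right (a : ℕ) : delannoyPoly R a 0 = 1 := by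
  simp [delannoyPoly]

theorem delannoyPoly_succ_succ (a b : ℕ) :
    delannoyPoly R (a + 1) (b + 1) =
      delannoyPoly R a (b + 1) + delannoyPoly R (a + 1) b + X * delannoyPoly R a b := by
  ext (_ | s)
  · simp only [coeff_add, coeff_delannoyPoly, coeff_X_mul_zero, Nat.sub_zero, Nat.choose_zero_right]
    rw [show a + 1 + (b + 1) = a + b + 1 + 1 by omega, Nat.choose_succ_succ']
    push_cast
    ring_nf
  · simp only [coeff_add, coeff_X_mul, coeff_delannoyPoly]
    rw [show a + 1 + (b + 1) - (s + 1) = a + b + 1 - s by omega,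
      show a + (b + 1) - (s + 1) = a + b - s by omega,
      show a + 1 + b - (s + 1) = a + b - s by omega, Nat.choose_add_sub_mul_choose_succ]
    push_cast
    ring

theorem delannoyPoly_eq_sum_factorial (a b : ℕ) :
    delannoyPoly ℚ a b = ∑ r ∈ range (min (a + 1) (b + 1)),
      C (((a + 1 + (b + 1) - 2 - r).factorial : ℚ) /
        (((a + 1 - 1 - r).factorial : ℚ) * ((b + 1 - 1 - r).factorial : ℚ) *
          (r.factorial : ℚ))) * X ^ r := by
  simp only [Nat.add_sub_cancel, show a + 1 + (b + 1) - 2 = a + b by omega,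
    Nat.add_min_add_right, delannoyPoly]
  refine sum_congr rfl fun r hr => ?_
  have hr : r ≤ min a b := Nat.lt_succ_iff.mp (mem_range.mp hr)
  rw [Nat.cast_choose_add_sub_mul_choose (le_min_iff.mp hr).1 (le_min_iff.mp hr).2]

end Delannoy

namespace MvPowerSeries

section Bivariate

variable {R : Type*} [Semiring R]

def bivariate (g : ℕ → ℕ → R) : MvPowerSeries (Fin 2) R := fun d => g (d 0) (d 1)

@[simp]
theorem coeff_bivariate (g : ℕ → ℕ → R) (d : Fin 2 →₀ ℕ) :
    coeff d (bivariate g) = g (d 0) (d 1) := rfl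

theorem one_eq_bivariate :
    (1 : MvPowerSeries (Fin 2) R) = bivariate fun i j => if i = 0 ∧ j = 0 then 1 else 0 := by
  ext d
  simp [coeff_one, Finsupp.ext_iff, Fin.forall_fin_two]

theorem C_mul_bivariate (c : R) (g : ℕ → ℕ → R) :
    C c * bivariate g = bivariate fun i j => c * g i j := by
  ext d
  simp

theorem X_zero_mul_bivariate (g : ℕ → ℕ → R) :
    X 0 * bivariate g = bivariate fun i j => if 1 ≤ i then g (i - 1) j else 0 := by
  ext d
  simp only [X, coeff_monomial_mul, Finsupp.single_le_iff, coeff_bivariate, one_mul]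
  split_ifs <;> simp

theorem X_one_mul_bivariate (g : ℕ → ℕ → R) :
    X 1 * bivariate g = bivariate fun i j => if 1 ≤ j then g i (j - 1) else 0 := by
  ext d
  simp only [X, coeff_monomial_mul, Finsupp.single_le_iff, coeff_bivariate, one_mul]
  split_ifs <;> simp

end Bivariate

theorem eq_invOfUnit_of_mul_eq_one {σ R : Type*} [Ring R] {φ ψ : MvPowerSeries σ R} {u : Rˣ}
    (hφ : constantCoeff φ = u) (h : φ * ψ = 1) : ψ = invOfUnit φ u := by
  calc ψ = invOfUnit φ u * φ * ψ := by rw [invOfUnit_mul φ u hφ, one_mul]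
    _ = invOfUnit φ u := by rw [mul_assoc, h, mul_one]

theorem one_sub_mul_bivariate_delannoyPoly {R : Type*} [CommRing R] :
    (1 - X 0 - C (σ := Fin 2) (Polynomial.X : R[X]) * X 0 * X 1 - X 1) *
      bivariate (delannoyPoly R) = 1 := by
  rw [sub_mul, sub_mul, sub_mul, one_mul, one_eq_bivariate]
  simp only [mul_assoc, X_zero_mul_bivariate, X_one_mul_bivariate, C_mul_bivariate]
  ext d : 1
  simp only [map_sub, coeff_bivariate]
  rcases d 0 with _ | i <;> rcases d 1 with _ | j <;> simp [delannoyPoly_succ_succ]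
  ring

end MvPowerSeries

/-- As formal power series in `x̄ = X 0` and `y = X 1` over `ℚ[v]`, one has
`∑_{i,j ≥ 1} (∑_{0 ≤ r ≤ min i j - 1} (i+j-2-r)!/((i-1-r)!(j-1-r)!r!) vʳ) x̄ⁱ yʲ
  = x̄ y / (1 - x̄ - v x̄ y - y)`,
where the right-hand side is `x̄ y` times the formal inverse of `1 - x̄ - v x̄ y - y`. -/
theorem stmt_3 :
    (fun d : Fin 2 →₀ ℕ =>
        if 1 ≤ d 0 ∧ 1 ≤ d 1 then
          ∑ r ∈ Finset.range (min (d 0) (d 1)),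
            Polynomial.C ((((d 0) + (d 1) - 2 - r).factorial : ℚ) /
              ((((d 0) - 1 - r).factorial : ℚ) * (((d 1) - 1 - r).factorial : ℚ) *
                (r.factorial : ℚ))) * Polynomial.X ^ r
        else 0 : MvPowerSeries (Fin 2) (Polynomial ℚ)) =
      MvPowerSeries.X 0 * MvPowerSeries.X 1 *
        MvPowerSeries.invOfUnit
          (1 - MvPowerSeries.X 0 - MvPowerSeries.C (σ := Fin 2) (R := Polynomial ℚ) Polynomial.X *
            MvPowerSeries.X 0 * MvPowerSeries.X 1 - MvPowerSeries.X 1) 1 := by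
  funext d
  show _ = MvPowerSeries.coeff (R := ℚ[X]) d
    (MvPowerSeries.X 0 * MvPowerSeries.X 1 * MvPowerSeries.invOfUnit _ 1)
  rw [← MvPowerSeries.eq_invOfUnit_of_mul_eq_one (u := 1) (by simp)
      MvPowerSeries.one_sub_mul_bivariate_delannoyPoly, mul_assoc,
    MvPowerSeries.X_one_mul_bivariate, MvPowerSeries.X_zero_mul_bivariate,
    MvPowerSeries.coeff_bivariate]
  rcases d 0 with _ | i <;> rcases d 1 with _ | j <;> simp [delannoyPoly_eq_sum_factorial]
end

section
/- If θ ∈ (0, π) satisfies cos θ = 7/8, then θ/π is irrational; consequently 1 + π/arccos(7/8) is irrational. -/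
private def dseq : ℕ → ℤ
  | 0 => 2
  | 1 => 7
  | (n + 2) => 7 * dseq (n + 1) - 16 * dseq n

private lemma dseq_odd : ∀ n, Odd (dseq (n + 1))
  | 0 => by decide
  | (n + 1) => by
    have h := dseq_odd n
    show Odd (7 * dseq (n + 1) - 16 * dseq n)
    rcases h with ⟨k, hk⟩
    exact ⟨7 * k + 3 - 8 * dseq n, by rw [hk]; ring⟩

private lemma dseq_eq {θ : ℝ} (h : Real.cos θ = 7 / 8) :
    ∀ n, (dseq n : ℝ) = 2 * 4 ^ n * Real.cos (n * θ)
  | 0 => by simp [dseq]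
  | 1 => by simp [dseq, h]; ring
  | (n + 2) => by
    have h1 := dseq_eq h (n + 1)
    have h2 := dseq_eq h n
    have key : Real.cos ((n + 2) * θ) =
        2 * Real.cos θ * Real.cos ((n + 1) * θ) - Real.cos (n * θ) := by
      have := Real.cos_add ((n + 1) * θ) θ
      have := Real.cos_sub ((n + 1) * θ) θ
      have e1 : ((n : ℝ) + 2) * θ = (n + 1) * θ + θ := by ring
      have e2 : (n : ℝ) * θ = (n + 1) * θ - θ := by ring
      rw [e1, e2, Real.cos_add, Real.cos_sub]
      ring
    show ((7 * dseq (n + 1) - 16 * dseq n : ℤ) : ℝ) = _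
    push_cast
    rw [h1, h2, key, h]
    push_cast
    ring

/-- If `θ ∈ (0,π)` satisfies `cos θ = 7/8`, then `θ/π` is irrational;
consequently `1 + π/arccos(7/8)` is irrational. -/
theorem stmt_12 (θ : ℝ) (hθ : θ ∈ Set.Ioo 0 Real.pi) (h : Real.cos θ = 7 / 8) :
    Irrational (θ / Real.pi) ∧ Irrational (1 + Real.pi / Real.arccos (7 / 8)) := by
  have hpi := Real.pi_pos
  have hirr : Irrational (θ / Real.pi) := by
    rw [Irrational]
    rintro ⟨q, hq⟩
    have hθπ : θ = q * Real.pi := by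
      field_simp at hq
      linarith [hq]
    set n : ℕ := 2 * q.den with hn
    have hdq : ((q.den : ℝ)) * q = q.num := by
      rw [mul_comm]
      exact_mod_cast q.mul_den_eq_num
    have hnθ : (n : ℝ) * θ = (q.num : ℝ) * (2 * Real.pi) := by
      rw [hθπ, hn]
      push_cast
      rw [show (2 : ℝ) * q.den * (q * Real.pi) = ((q.den : ℝ) * q) * (2 * Real.pi) by ring, hdq]
    have hcos : Real.cos (n * θ) = 1 := by
      rw [hnθ]
      exact Real.cos_int_mul_two_pi q.num
    have hd : (dseq n : ℝ) = 2 * 4 ^ n := by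
      rw [dseq_eq h n, hcos, mul_one]
    have hdz : dseq n = 2 * 4 ^ n := by exact_mod_cast hd
    have hpos : 1 ≤ n := by
      have := q.den_pos; omega
    obtain ⟨m, hm⟩ : ∃ m, n = m + 1 := ⟨n - 1, by omega⟩
    have hodd := dseq_odd m
    rw [← hm, hdz] at hodd
    rcases hodd with ⟨k, hk⟩
    omega
  refine ⟨hirr, ?_⟩
  have harc : Real.arccos (7 / 8) = θ := by
    rw [← h, Real.arccos_cos hθ.1.le hθ.2.le]
  rw [harc]
  have : Irrational (Real.pi / θ) := by
    have := hirr.inv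
    rwa [← one_div, one_div_div] at this
  simpa using Irrational.ratCast_add (q := 1) this
end

section
/- Neither of the two complex roots of the polynomial 4z² - 7z + 4 is a root of unity. -/
private def aux13 : ℕ → ℤ
  | 0 => 2
  | 1 => 7
  | (n+2) => 7 * aux13 (n+1) - 16 * aux13 n

private lemma aux13_odd : ∀ n, 1 ≤ n → Odd (aux13 n) := by
  intro n hn
  induction n with
  | zero => omega
  | succ m ih =>
    match m, ih with
    | 0, _ => exact ⟨3, by decide⟩
    | (k+1), ih =>
      have h := ih (by omega)
      show Odd (7 * aux13 (k+1) - 16 * aux13 k)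
      obtain ⟨j, hj⟩ := h
      exact ⟨7 * j - 8 * aux13 k + 3, by rw [hj]; ring⟩

/-- Neither of the two complex roots of `4z² - 7z + 4` is a root of unity. -/
theorem stmt_13 (z : ℂ) (hz : 4 * z ^ 2 - 7 * z + 4 = 0) :
    ¬∃ n : ℕ, 0 < n ∧ z ^ n = 1 := by
  have key : ∀ n, (aux13 n : ℂ) * z ^ n = 4 ^ n * (z ^ (2 * n) + 1) := by
    intro n
    induction n using Nat.strong_induction_on with
    | _ n ih =>
      match n with
      | 0 => norm_num [aux13]
      | 1 => show ((7 : ℤ) : ℂ) * z ^ 1 = _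
             push_cast
             linear_combination -hz
      | (k+2) =>
        have h1 := ih (k+1) (by omega)
        have h2 := ih k (by omega)
        show ((7 * aux13 (k+1) - 16 * aux13 k : ℤ) : ℂ) * z ^ (k+2) = _
        push_cast
        linear_combination 7 * z * h1 - 16 * z ^ 2 * h2 -
          ((4:ℂ) ^ k * (4 * z ^ (2 * k + 2) + 4)) * hz
  rintro ⟨n, hn, hzn⟩
  have h2n : z ^ (2 * n) = 1 := by
    rw [mul_comm, pow_mul, hzn, one_pow]
  have : (aux13 n : ℂ) = 2 * 4 ^ n := by
    have := key n
    rw [hzn, h2n] at this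
    linear_combination this
  have hint : aux13 n = 2 * 4 ^ n := by exact_mod_cast this
  have hodd := aux13_odd n hn
  rw [hint] at hodd
  exact (Int.not_odd_iff_even.mpr ⟨4 ^ n, by ring⟩) hodd
end

section
/- The real number (29 + √13)/18 is not an algebraic integer; consequently, if θ ∈ (0, π) satisfies cos θ = (29 + √13)/36, then θ is not a rational multiple of π. -/
open Polynomial

private lemma dickson_deg (n : ℕ) :
    (Polynomial.dickson 1 (1 : ℤ) n).natDegree = n ∧
      (0 < n → (Polynomial.dickson 1 (1 : ℤ) n).Monic) := by
  induction n using Nat.strong_induction_on with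
  | _ n ih =>
    match n with
    | 0 =>
      refine ⟨?_, by simp⟩
      rw [Polynomial.dickson_zero]
      norm_num [Polynomial.natDegree_ofNat]
    | 1 => simp [Polynomial.dickson_one, Polynomial.monic_X]
    | (m + 2) =>
      obtain ⟨h1, h1m⟩ := ih (m + 1) (by omega)
      obtain ⟨h0, _⟩ := ih m (by omega)
      have hm1 : (Polynomial.dickson 1 (1 : ℤ) (m + 1)).Monic := h1m (by omega)
      have hXm : (X * Polynomial.dickson 1 (1 : ℤ) (m + 1)).Monic :=
        Polynomial.monic_X.mul hm1
      have hdegX : (X * Polynomial.dickson 1 (1 : ℤ) (m + 1)).natDegree = m + 2 := by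
        rw [Polynomial.natDegree_mul Polynomial.X_ne_zero hm1.ne_zero,
          Polynomial.natDegree_X, h1]
        omega
      have hCm : (Polynomial.C (1 : ℤ) * Polynomial.dickson 1 (1 : ℤ) m)
          = Polynomial.dickson 1 (1 : ℤ) m := by simp
      have hdlt : (Polynomial.C (1 : ℤ) * Polynomial.dickson 1 (1 : ℤ) m).degree
          < (X * Polynomial.dickson 1 (1 : ℤ) (m + 1)).degree := by
        rw [hCm, Polynomial.degree_eq_natDegree hXm.ne_zero, hdegX]
        refine lt_of_le_of_lt Polynomial.degree_le_natDegree ?_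
        rw [h0]
        exact_mod_cast (by omega : m < m + 2)
      have hmon : (Polynomial.dickson 1 (1 : ℤ) (m + 2)).Monic := by
        rw [Polynomial.dickson_add_two]
        exact hXm.sub_of_left hdlt
      constructor
      · rw [Polynomial.dickson_add_two,
          Polynomial.natDegree_sub_eq_left_of_natDegree_lt, hdegX]
        have hle : (Polynomial.C (1 : ℤ) * Polynomial.dickson 1 (1 : ℤ) m).natDegree ≤ m := by
          rw [hCm, h0]
        omega
      · intro _; exact hmon

private lemma dickson_eval_two_cos (n : ℕ) (θ : ℝ) :
    (Polynomial.dickson 1 (1 : ℝ) n).eval (2 * Real.cos θ) = 2 * Real.cos (n * θ) := by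
  have key := Polynomial.dickson_one_one_eval_add_inv
    (Complex.exp (θ * Complex.I)) (Complex.exp (-(θ * Complex.I)))
    (by rw [← Complex.exp_add, add_neg_cancel, Complex.exp_zero]) n
  have h2c : (2 : ℂ) * Complex.cos θ
      = Complex.exp (θ * Complex.I) + Complex.exp (-(θ * Complex.I)) := by
    rw [Complex.cos]; ring_nf
  have h2cn : (2 : ℂ) * Complex.cos ((n : ℂ) * θ)
      = Complex.exp (θ * Complex.I) ^ n + Complex.exp (-(θ * Complex.I)) ^ n := by
    rw [Complex.cos, ← Complex.exp_nat_mul, ← Complex.exp_nat_mul]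
    ring_nf
  have hmap : ∀ r : ℝ, Complex.ofReal ((Polynomial.dickson 1 (1 : ℝ) n).eval r)
      = (Polynomial.dickson 1 (1 : ℂ) n).eval (r : ℂ) := by
    intro r
    have hd : (Polynomial.dickson 1 (1 : ℝ) n).map Complex.ofRealHom
        = Polynomial.dickson 1 (1 : ℂ) n := by
      simp [Polynomial.map_dickson]
    rw [← hd, Polynomial.eval_map]
    exact (Polynomial.eval₂_hom Complex.ofRealHom r).symm
  have hC : Complex.ofReal ((Polynomial.dickson 1 (1 : ℝ) n).eval (2 * Real.cos θ))
      = Complex.ofReal (2 * Real.cos (n * θ)) := by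
    rw [hmap]
    push_cast [Complex.ofReal_cos]
    rw [h2c, key, ← h2cn]
  exact_mod_cast hC

private lemma two_cos_isIntegral (q : ℚ) :
    IsIntegral ℤ (2 * Real.cos (q * Real.pi)) := by
  set n : ℕ := q.den with hn
  have hn0 : 0 < n := q.pos
  obtain ⟨hdeg, hmon'⟩ := dickson_deg n
  have hmon := hmon' hn0
  refine ⟨(Polynomial.dickson 1 (1 : ℤ) n) ^ 2 - Polynomial.C 4, ?_, ?_⟩
  · refine (hmon.pow 2).sub_of_left ?_
    calc (Polynomial.C (4 : ℤ)).degree ≤ 0 := Polynomial.degree_C_le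
      _ < ((Polynomial.dickson 1 (1 : ℤ) n) ^ 2).degree := by
          rw [Polynomial.degree_eq_natDegree (hmon.pow 2).ne_zero,
            Polynomial.natDegree_pow, hdeg]
          exact_mod_cast (by omega : 0 < 2 * n)
  · have haev : ∀ p : ℤ[X], (Polynomial.aeval (2 * Real.cos (q * Real.pi))) p
        = (p.map (Int.castRingHom ℝ)).eval (2 * Real.cos (q * Real.pi)) := by
      intro p
      rw [Polynomial.aeval_def, algebraMap_int_eq, Polynomial.eval_map]
    show (Polynomial.aeval (2 * Real.cos ((q : ℝ) * Real.pi)))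
      (Polynomial.dickson 1 (1 : ℤ) n ^ 2 - Polynomial.C 4) = 0
    rw [haev, Polynomial.map_sub, Polynomial.map_pow, Polynomial.map_dickson,
      Polynomial.map_C, Polynomial.eval_sub, Polynomial.eval_pow]
    rw [show ((Int.castRingHom ℝ) 1) = (1 : ℝ) by simp,
      dickson_eval_two_cos, Polynomial.eval_C]
    have hnq : (n : ℝ) * ((q : ℝ) * Real.pi) = (q.num : ℝ) * Real.pi := by
      have h1 : ((q.den : ℚ) * q : ℚ) = (q.num : ℚ) := by
        rw [mul_comm]; exact_mod_cast Rat.mul_den_eq_num q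
      have h2 : ((q.den : ℝ)) * (q : ℝ) = (q.num : ℝ) := by exact_mod_cast h1
      rw [← mul_assoc, hn, h2]
    rw [hnq]
    have habs : |Real.cos ((q.num : ℝ) * Real.pi)| = 1 := Real.abs_cos_int_mul_pi q.num
    have hsq : Real.cos ((q.num : ℝ) * Real.pi) ^ 2 = 1 := by
      rw [← sq_abs, habs]; norm_num
    rw [show ((Int.castRingHom ℝ) (4 : ℤ)) = (4 : ℝ) by simp]
    nlinarith [hsq]

private lemma irrational_x : Irrational ((29 + Real.sqrt 13) / 18 : ℝ) := by
  have h13 : Irrational (Real.sqrt 13) := by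
    rw [show (13 : ℝ) = ((13 : ℕ) : ℝ) by norm_num]
    exact (by norm_num : Nat.Prime 13).irrational_sqrt
  have := (h13.natCast_add 29).div_natCast (by norm_num : (18 : ℕ) ≠ 0)
  simpa using this

private lemma not_integral_x : ¬ IsIntegral ℤ (((29 + Real.sqrt 13) / 18 : ℝ)) := by
  intro hx
  set x : ℝ := (29 + Real.sqrt 13) / 18 with hxdef
  set p : ℚ[X] := X ^ 2 + Polynomial.C (-29 / 9 : ℚ) * X + Polynomial.C (23 / 9 : ℚ)
    with hp
  have hpdeg : p.natDegree = 2 := by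
    rw [hp]; compute_degree!
  have hpmonic : p.Monic := by
    rw [hp, add_assoc]
    apply Polynomial.monic_X_pow_add

    refine lt_of_le_of_lt (Polynomial.degree_add_le _ _) (max_lt ?_ ?_)
    · refine lt_of_le_of_lt ((Polynomial.degree_mul_le _ _).trans
        (add_le_add Polynomial.degree_C_le Polynomial.degree_X_le)) ?_
      decide
    · exact lt_of_le_of_lt Polynomial.degree_C_le (by decide)
  have hroot : (Polynomial.aeval x) p = 0 := by
    have hs : Real.sqrt 13 ^ 2 = 13 := Real.sq_sqrt (by norm_num)
    simp only [hp, map_add, map_mul, map_pow, Polynomial.aeval_X, Polynomial.aeval_C]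
    push_cast
    simp only [map_div₀, map_neg, map_ofNat]
    rw [hxdef]
    field_simp
    ring_nf
    nlinarith [hs]
  have hdvd : minpoly ℚ x ∣ p := minpoly.dvd ℚ x hroot
  have hirr : x ∉ (algebraMap ℚ ℝ).range := by
    rintro ⟨r, hr⟩
    exact irrational_x ⟨r, by simpa using hr⟩
  have hint : IsIntegral ℚ x := hx.tower_top
  have h2le : 2 ≤ (minpoly ℚ x).natDegree :=
    (minpoly.two_le_natDegree_iff hint).mpr hirr
  have hle2 : (minpoly ℚ x).natDegree ≤ 2 := by
    rw [← hpdeg]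
    exact Polynomial.natDegree_le_of_dvd hdvd hpmonic.ne_zero
  have heq : minpoly ℚ x = p := by
    obtain ⟨r, hr⟩ := hdvd
    have hmono : (minpoly ℚ x).Monic := minpoly.monic hint
    have hrdeg : r.natDegree = 0 := by
      have hr0 : r ≠ 0 := by
        rintro rfl
        rw [mul_zero] at hr
        exact hpmonic.ne_zero hr
      have hnd := Polynomial.natDegree_mul hmono.ne_zero hr0
      rw [← hr, hpdeg] at hnd
      omega
    have hrlead : r.leadingCoeff = 1 := by
      have hlc := congrArg Polynomial.leadingCoeff hr
      rw [Polynomial.leadingCoeff_mul, hmono.leadingCoeff, one_mul,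
        hpmonic.leadingCoeff] at hlc
      exact hlc.symm
    have hr1 : r = 1 := by
      rw [Polynomial.eq_C_of_natDegree_eq_zero hrdeg]
      rw [Polynomial.eq_C_of_natDegree_eq_zero hrdeg] at hrlead
      simp only [Polynomial.leadingCoeff_C] at hrlead
      rw [hrlead]; simp
    rw [hr, hr1, mul_one]
  have hcoeff : (minpoly ℚ x).coeff 1 = -29 / 9 := by
    rw [heq, hp]
    simp [Polynomial.coeff_C, Polynomial.coeff_X_pow]
  have hmap : minpoly ℚ x = (minpoly ℤ x).map (algebraMap ℤ ℚ) :=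
    minpoly.isIntegrallyClosed_eq_field_fractions ℚ ℝ hx
  rw [hmap, Polynomial.coeff_map] at hcoeff
  have hden : ((minpoly ℤ x).coeff 1 : ℚ).den = 1 := Rat.den_intCast _
  rw [show (algebraMap ℤ ℚ) ((minpoly ℤ x).coeff 1) = ((minpoly ℤ x).coeff 1 : ℚ) from rfl]
    at hcoeff
  rw [hcoeff] at hden
  norm_num at hden

/-- The real number `(29 + √13)/18` is not an algebraic integer; consequently,
if `θ ∈ (0,π)` satisfies `cos θ = (29 + √13)/36`, then `θ` is not a rational
multiple of `π`. -/
theorem stmt_14 :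
    ¬ IsIntegral ℤ (((29 + Real.sqrt 13) / 18 : ℝ)) ∧
    ∀ θ ∈ Set.Ioo 0 Real.pi, Real.cos θ = (29 + Real.sqrt 13) / 36 →
      ¬∃ q : ℚ, θ = (q : ℝ) * Real.pi := by
  refine ⟨not_integral_x, ?_⟩
  rintro θ hθ hcos ⟨q, rfl⟩
  apply not_integral_x
  have h : ((29 + Real.sqrt 13) / 18 : ℝ) = 2 * Real.cos ((q : ℝ) * Real.pi) := by
    rw [hcos]; ring
  rw [h]
  exact two_cos_isIntegral q
end

section
/- Let (s_n), (t_n) be sequences of nonnegative reals and (u_n) a sequence of naturals with u_n ≤ n, u_n/n → 1. Suppose that for every real v ≥ 1 there exists C(v) > 0 and γ(v) > 0 with t_n(v) ≤ C(v)·γ(v)ⁿ for all n, that s_n · v^{u_n} ≤ t_n(v) for all n and all v ≥ 1, that s_n ≥ 1 for all n, and that γ(v)/v → 1 as v → ∞. Then lim_{n→∞} s_n^{1/n} = 1. -/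
open Filter

/-- Abstract form of Corollary 4.6: if `s n ≥ 1`, `s n · v^(u n) ≤ t v n` for all
`v ≥ 1`, `t v n ≤ C v · (γ v)ⁿ` with `C v, γ v > 0`, `u n ≤ n` with `u n / n → 1`,
and `γ v / v → 1` as `v → ∞`, then `s n^(1/n) → 1`. -/
theorem stmt_17 (s : ℕ → ℝ) (t : ℝ → ℕ → ℝ) (u : ℕ → ℕ) (C γ : ℝ → ℝ)
    (hs_nonneg : ∀ n, 0 ≤ s n)
    (ht_nonneg : ∀ v, 1 ≤ v → ∀ n, 0 ≤ t v n)
    (hu_le : ∀ n, u n ≤ n)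
    (hu_lim : Tendsto (fun n : ℕ => (u n : ℝ) / (n : ℝ)) atTop (nhds 1))
    (hbound : ∀ v, 1 ≤ v → 0 < C v ∧ 0 < γ v ∧ ∀ n, t v n ≤ C v * γ v ^ n)
    (hst : ∀ n, ∀ v, 1 ≤ v → s n * v ^ (u n) ≤ t v n)
    (hs_ge : ∀ n, 1 ≤ s n)
    (hγ : Tendsto (fun v : ℝ => γ v / v) atTop (nhds 1)) :
    Tendsto (fun n : ℕ => (s n) ^ ((1 : ℝ) / (n : ℝ))) atTop (nhds 1) := by
  rw [tendsto_order]
  constructor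
  · intro a ha
    filter_upwards with n
    have h1 : (1 : ℝ) ≤ s n ^ ((1 : ℝ) / (n : ℝ)) := by
      have := Real.rpow_le_rpow zero_le_one (hs_ge n)
        (by positivity : (0 : ℝ) ≤ (1 : ℝ) / (n : ℝ))
      simpa using this
    linarith
  · intro b hb
    have h1 : (1 : ℝ) < (1 + b) / 2 := by linarith
    obtain ⟨v, hv2, hv1⟩ :=
      ((hγ.eventually (gt_mem_nhds h1)).and (eventually_ge_atTop (1 : ℝ))).exists
    obtain ⟨hC, hγv, hbd⟩ := hbound v hv1
    have hv0 : (0 : ℝ) < v := by linarith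
    -- auxiliary limits
    have l1 : Tendsto (fun n : ℕ => C v ^ ((1 : ℝ) / (n : ℝ))) atTop (nhds 1) := by
      have := (Real.continuousAt_const_rpow (b := (0 : ℝ)) hC.ne').tendsto.comp
        tendsto_one_div_atTop_nhds_zero_nat
      simpa [Function.comp_def, Real.rpow_zero] using this
    have l2 : Tendsto (fun n : ℕ => v ^ (-((u n : ℝ) / (n : ℝ)))) atTop (nhds v⁻¹) := by
      have he : Tendsto (fun n : ℕ => -((u n : ℝ) / (n : ℝ))) atTop (nhds (-1)) :=
        hu_lim.neg
      have := (Real.continuousAt_const_rpow (b := (-1 : ℝ)) hv0.ne').tendsto.comp he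
      simpa [Function.comp_def, Real.rpow_neg_one] using this
    have hg : Tendsto
        (fun n : ℕ => C v ^ ((1 : ℝ) / (n : ℝ)) * (γ v * v ^ (-((u n : ℝ) / (n : ℝ)))))
        atTop (nhds (γ v / v)) := by
      have := l1.mul ((tendsto_const_nhds (x := γ v)).mul l2)
      simpa [div_eq_mul_inv] using this
    have hlt : γ v / v < b := by linarith
    filter_upwards [hg.eventually (gt_mem_nhds hlt), eventually_ge_atTop 1] with n hgn hn1
    have hn' : (n : ℝ) ≠ 0 := Nat.cast_ne_zero.mpr (by omega)
    have hpow : (0 : ℝ) < v ^ (u n) := pow_pos hv0 _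
    have hbase : s n ≤ (C v * γ v ^ n) / v ^ (u n) :=
      (le_div_iff₀ hpow).mpr ((hst n v hv1).trans (hbd n))
    have key : ((C v * γ v ^ n) / v ^ (u n)) ^ ((1 : ℝ) / (n : ℝ))
        = C v ^ ((1 : ℝ) / (n : ℝ)) * (γ v * v ^ (-((u n : ℝ) / (n : ℝ)))) := by
      rw [Real.div_rpow (by positivity) (by positivity),
        Real.mul_rpow hC.le (by positivity),
        ← Real.rpow_natCast (γ v) n, ← Real.rpow_natCast v (u n),
        ← Real.rpow_mul hγv.le, ← Real.rpow_mul hv0.le,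
        mul_one_div, div_self hn', Real.rpow_one,
        mul_one_div, div_eq_mul_inv _ (v ^ ((u n : ℝ) / (n : ℝ))),
        ← Real.rpow_neg hv0.le, mul_assoc]
    calc s n ^ ((1 : ℝ) / (n : ℝ))
        ≤ ((C v * γ v ^ n) / v ^ (u n)) ^ ((1 : ℝ) / (n : ℝ)) :=
          Real.rpow_le_rpow (hs_nonneg n) hbase (by positivity)
      _ = _ := key
      _ < b := hgn
end
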